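/- Let d ≥ 6 and let I ⊆ ℝ be an interval. There exists a constant C = C(d) such that for every measurable v : I × ℝ^d → ℂ, with Ω' := {(t,x) ∈ I × ℝ^d : |v(t,x)| ≤ W(x)/4}, one has ‖ W^{−1} |∇W| · |v|^{p_c} ‖_{L^2_t L^{2d/(d+2)}_x(Ω')} ≤ C ‖v‖_{L^{q₀}_t L^{r₀}_x(I×ℝ^d)}^{(2d+3)/(2(d−2))}, where q₀ = (2d+3)/(d−2) and r₀ = 2d(2d+3)/((d−2)(2d−1)). -/

import Mathlib

/-!
On `Ω'` one has `|v| ≤ W/4`, so `|v|^{p_c} ≤ |v|^θ (W/4)^{p_c-θ}` with `θ = (2d+3)/(2(d-2))`;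
this moves the smallness of `v` into the weight `g = W⁻¹|∇W|(W/4)^{1/(2(d-2))}`.
Since `∇W = -W x / (d (1 + |x|²/(d(d-2))))`, the weight decays like `|x|^{-3/2}` and hence lies
in `L^{4d/5}(ℝ^d)`. Hölder in `x` with `(d+2)/(2d) = 5/(4d) + (2d-1)/(4d)` bounds the
`L^{2d/(d+2)}_x` norm by `‖g‖_{4d/5} ‖v‖_{L^{r₀}_x}^θ` (note `θ · 4d/(2d-1) = r₀`), and the
`L²_t` norm of the latter is `‖v‖_{L^{q₀}_t L^{r₀}_x}^θ` because `2θ = q₀`.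
-/

open MeasureTheory
open scoped ENNReal

noncomputable section

/-- ℝ^d as Euclidean space -/
abbrev Euc (d : ℕ) := EuclideanSpace ℝ (Fin d)

/-- The ground state W(x) = (1 + |x|²/(d(d−2)))^{−(d−2)/2}. -/
def Wgs (d : ℕ) (x : Euc d) : ℝ :=
  (1 + ‖x‖ ^ 2 / ((d : ℝ) * ((d : ℝ) - 2))) ^ (-(((d : ℝ) - 2) / 2))

/-- p_c = (d+2)/(d-2) -/
def pc (d : ℕ) : ℝ := ((d : ℝ) + 2) / ((d : ℝ) - 2)

/-- Mixed norm ‖F‖_{L^q_t L^r_x(Ω)} = (∫_I (∫_{ℝ^d} |F(t,x)|^r 1_Ω(t,x) dx)^{q/r} dt)^{1/q}. -/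
def mixNorm (d : ℕ) (q r : ℝ) (I : Set ℝ) (Ω : Set (ℝ × Euc d))
    (F : ℝ × Euc d → ℝ) : ℝ≥0∞ :=
  (∫⁻ t in I,
      (∫⁻ x, Ω.indicator (fun p => ENNReal.ofReal (|F p| ^ r)) (t, x)) ^ (q / r)) ^ (1 / q)

/-- time exponent q₀ = (2d+3)/(d−2) -/
def q0 (d : ℕ) : ℝ := (2 * (d : ℝ) + 3) / ((d : ℝ) - 2)

/-- space exponent r₀ = 2d(2d+3)/((d−2)(2d−1)) -/
def r0 (d : ℕ) : ℝ := 2 * (d : ℝ) * (2 * (d : ℝ) + 3) / (((d : ℝ) - 2) * (2 * (d : ℝ) - 1))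

lemma Real.rpow_le_rpow_mul_rpow_sub_of_le {s w θ p : ℝ} (hs : 0 ≤ s) (hsw : s ≤ w)
    (hθ : 0 ≤ θ) (hθp : θ ≤ p) : s ^ p ≤ s ^ θ * w ^ (p - θ) :=
  calc s ^ p = s ^ θ * s ^ (p - θ) := by
        rw [← Real.rpow_add_of_nonneg hs hθ (sub_nonneg.2 hθp), add_sub_cancel]
    _ ≤ s ^ θ * w ^ (p - θ) := by gcongr

lemma ENNReal.ofReal_rpow_rpow_div {y r s : ℝ} (hy : 0 ≤ y) (hr : 0 < r) (hs : 0 ≤ s) :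
    ENNReal.ofReal (y ^ r) ^ (s / r) = ENNReal.ofReal (y ^ s) := by
  rw [ENNReal.ofReal_rpow_of_nonneg (Real.rpow_nonneg hy r) (div_nonneg hs hr.le),
    ← Real.rpow_mul hy, mul_div_cancel₀ s hr.ne']

section MixedHolder

variable {d : ℕ} {I : Set ℝ} {Ω : Set (ℝ × Euc d)} {F G : ℝ × Euc d → ℝ} {g : Euc d → ℝ}
  {a b r θ : ℝ}

lemma lintegral_indicator_rpow_le_of_le_weight_mul (hab : a.HolderTriple b r)
    (hg0 : ∀ x, 0 ≤ g x) (hg : Measurable g) (hG : Measurable G)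
    (hF : ∀ p ∈ Ω, |F p| ≤ g p.2 * |G p| ^ θ) (t : ℝ) :
    ∫⁻ x, Ω.indicator (fun p => ENNReal.ofReal (|F p| ^ r)) (t, x) ≤
      (∫⁻ x, ENNReal.ofReal (g x ^ a)) ^ (r / a) *
        (∫⁻ x, ENNReal.ofReal (|G (t, x)| ^ (θ * b))) ^ (r / b) := by
  obtain ⟨ha, hb, hr⟩ := hab.all_pos
  have hpointwise : ∀ x, Ω.indicator (fun p => ENNReal.ofReal (|F p| ^ r)) (t, x) ≤
      ENNReal.ofReal (g x ^ r) * ENNReal.ofReal ((|G (t, x)| ^ θ) ^ r) := by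
    intro x
    by_cases hx : (t, x) ∈ Ω
    · have hGθ : 0 ≤ |G (t, x)| ^ θ := Real.rpow_nonneg (abs_nonneg _) θ
      rw [Set.indicator_of_mem hx, ← ENNReal.ofReal_mul (Real.rpow_nonneg (hg0 x) r),
        ← Real.mul_rpow (hg0 x) hGθ]
      gcongr
      exact hF _ hx
    · simp [Set.indicator_of_notMem hx]
  have hG_t : Measurable fun x => G (t, x) := hG.comp measurable_prodMk_left
  calc ∫⁻ x, Ω.indicator (fun p => ENNReal.ofReal (|F p| ^ r)) (t, x)
      ≤ ∫⁻ x, ENNReal.ofReal (g x ^ r) * ENNReal.ofReal ((|G (t, x)| ^ θ) ^ r) :=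
        lintegral_mono hpointwise
    _ ≤ (∫⁻ x, ENNReal.ofReal (g x ^ r) ^ (a / r)) ^ (1 / (a / r)) *
          (∫⁻ x, ENNReal.ofReal ((|G (t, x)| ^ θ) ^ r) ^ (b / r)) ^ (1 / (b / r)) :=
        ENNReal.lintegral_mul_le_Lp_mul_Lq volume hab.holderConjugate_div_div
          (by fun_prop) (by fun_prop)
    _ = _ := by
        simp_rw [ENNReal.ofReal_rpow_rpow_div (hg0 _) hr ha.le,
          ENNReal.ofReal_rpow_rpow_div (Real.rpow_nonneg (abs_nonneg _) θ) hr hb.le,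
          ← Real.rpow_mul (abs_nonneg _), one_div_div]

theorem mixNorm_le_of_le_weight_mul {q : ℝ} (hq : 0 < q) (hab : a.HolderTriple b r)
    (hθ : 0 < θ) (hg0 : ∀ x, 0 ≤ g x) (hg : Measurable g)
    (hg_int : ∫⁻ x, ENNReal.ofReal (g x ^ a) ≠ ∞) (hG : Measurable G)
    (hF : ∀ p ∈ Ω, |F p| ≤ g p.2 * |G p| ^ θ) :
    mixNorm d q r I Ω F ≤
      (∫⁻ x, ENNReal.ofReal (g x ^ a)) ^ a⁻¹ * mixNorm d (θ * q) (θ * b) I Set.univ G ^ θ := by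
  obtain ⟨ha, hb, hr⟩ := hab.all_pos
  set A := ∫⁻ x, ENNReal.ofReal (g x ^ a)
  set N := fun t => ∫⁻ x, ENNReal.ofReal (|G (t, x)| ^ (θ * b))
  have hslice : ∀ t, (∫⁻ x, Ω.indicator (fun p => ENNReal.ofReal (|F p| ^ r)) (t, x)) ^ (q / r)
      ≤ A ^ (q / a) * N t ^ (θ * q / (θ * b)) := by
    intro t
    calc _ ≤ (A ^ (r / a) * N t ^ (r / b)) ^ (q / r) := by
          gcongr
          exact lintegral_indicator_rpow_le_of_le_weight_mul hab hg0 hg hG hF t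
      _ = A ^ (q / a) * N t ^ (θ * q / (θ * b)) := by
          rw [ENNReal.mul_rpow_of_nonneg _ _ (by positivity), ← ENNReal.rpow_mul,
            ← ENNReal.rpow_mul, mul_div_mul_left q b hθ.ne']
          congr 2 <;> field_simp
  unfold mixNorm
  simp only [Set.indicator_univ]
  calc _ ≤ (∫⁻ t in I, A ^ (q / a) * N t ^ (θ * q / (θ * b))) ^ (1 / q) := by
        gcongr with t
        exact hslice t
    _ = (A ^ (q / a) * ∫⁻ t in I, N t ^ (θ * q / (θ * b))) ^ (1 / q) := by
        rw [lintegral_const_mul' _ _ (ENNReal.rpow_ne_top_of_nonneg (by positivity) hg_int)]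
    _ = _ := by
        rw [ENNReal.mul_rpow_of_nonneg _ _ (by positivity), ← ENNReal.rpow_mul,
          ← ENNReal.rpow_mul]
        congr 2 <;> field_simp

end MixedHolder

section GroundState

variable {d : ℕ}

def WgsBase (d : ℕ) (x : Euc d) : ℝ := 1 + ‖x‖ ^ 2 / ((d : ℝ) * ((d : ℝ) - 2))

lemma Wgs_eq_rpow (x : Euc d) : Wgs d x = WgsBase d x ^ (-(((d : ℝ) - 2) / 2)) := rfl

lemma WgsBase_pos (hd : 2 < d) (x : Euc d) : 0 < WgsBase d x := by
  have hd' : (2 : ℝ) < d := by exact_mod_cast hd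
  have : 0 < (d : ℝ) * ((d : ℝ) - 2) := by nlinarith
  unfold WgsBase
  positivity

lemma Wgs_pos (hd : 2 < d) (x : Euc d) : 0 < Wgs d x :=
  Real.rpow_pos_of_pos (WgsBase_pos hd x) _

lemma sq_one_add_norm_le_WgsBase (hd : 2 < d) (x : Euc d) :
    (1 + ‖x‖) ^ 2 ≤ 2 * ((d : ℝ) * ((d : ℝ) - 2)) * WgsBase d x := by
  have hd' : (3 : ℝ) ≤ d := by exact_mod_cast hd
  have hc : 1 ≤ (d : ℝ) * ((d : ℝ) - 2) := by nlinarith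
  have hexpand : 2 * ((d : ℝ) * ((d : ℝ) - 2)) * WgsBase d x =
      2 * ((d : ℝ) * ((d : ℝ) - 2)) + 2 * ‖x‖ ^ 2 := by
    unfold WgsBase
    field_simp [show (d : ℝ) - 2 ≠ 0 by linarith]
  nlinarith [sq_nonneg (‖x‖ - 1)]

lemma WgsBase_rpow_neg_le (hd : 2 < d) {s : ℝ} (hs : 0 ≤ s) (x : Euc d) :
    WgsBase d x ^ (-s) ≤ (2 * ((d : ℝ) * ((d : ℝ) - 2))) ^ s * (1 + ‖x‖) ^ (-(2 * s)) := by
  have hd' : (2 : ℝ) < d := by exact_mod_cast hd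
  have hc : 0 < 2 * ((d : ℝ) * ((d : ℝ) - 2)) := by nlinarith
  have h1 : 0 < 1 + ‖x‖ := by positivity
  calc WgsBase d x ^ (-s) ≤ ((1 + ‖x‖) ^ 2 / (2 * ((d : ℝ) * ((d : ℝ) - 2)))) ^ (-s) :=
        Real.rpow_le_rpow_of_nonpos (by positivity)
          ((div_le_iff₀' hc).2 (sq_one_add_norm_le_WgsBase hd x)) (neg_nonpos.2 hs)
    _ = _ := by
        rw [Real.div_rpow (by positivity) hc.le, Real.rpow_neg hc.le, div_inv_eq_mul, mul_comm,
          ← Real.rpow_natCast, ← Real.rpow_mul h1.le]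
        push_cast
        ring_nf

lemma hasFDerivAt_Wgs (hd : 2 < d) (x : Euc d) :
    HasFDerivAt (Wgs d) ((-(Wgs d x / (d * WgsBase d x))) • innerSL ℝ x) x := by
  have hd' : (2 : ℝ) < d := by exact_mod_cast hd
  have hB := WgsBase_pos hd x
  have hbase : HasFDerivAt (WgsBase d)
      (((d : ℝ) * ((d : ℝ) - 2))⁻¹ • (2 • innerSL ℝ x)) x := by
    have h := ((hasStrictFDerivAt_norm_sq x).hasFDerivAt.const_mul
      ((d : ℝ) * ((d : ℝ) - 2))⁻¹).const_add 1
    have hfun : WgsBase d = fun y => 1 + ((d : ℝ) * ((d : ℝ) - 2))⁻¹ * ‖y‖ ^ 2 := by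
      funext y
      rw [WgsBase, div_eq_inv_mul]
    rwa [hfun]
  refine ((Real.hasDerivAt_rpow_const (p := -(((d : ℝ) - 2) / 2))
    (Or.inl hB.ne')).comp_hasFDerivAt x hbase).congr_fderiv ?_
  rw [← Nat.cast_smul_eq_nsmul ℝ, smul_smul, smul_smul, Wgs_eq_rpow, Real.rpow_sub_one hB.ne']
  congr 1
  field_simp [show (d : ℝ) - 2 ≠ 0 by linarith]
  ring

lemma inv_Wgs_mul_norm_fderiv_Wgs (hd : 2 < d) (x : Euc d) :
    (Wgs d x)⁻¹ * ‖fderiv ℝ (Wgs d) x‖ = ‖x‖ / d * (WgsBase d x)⁻¹ := by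
  have hW := Wgs_pos hd x
  have hB := WgsBase_pos hd x
  rw [(hasFDerivAt_Wgs hd x).fderiv, norm_smul, innerSL_apply_norm, norm_neg,
    Real.norm_of_nonneg (by positivity)]
  field_simp

end GroundState

theorem lintegral_ofReal_rpow_lt_top_of_le_mul_one_add_norm_rpow_neg {E : Type*}
    [NormedAddCommGroup E] [NormedSpace ℝ E] [FiniteDimensional ℝ E] [MeasurableSpace E]
    [BorelSpace E] {μ : Measure E} [μ.IsAddHaarMeasure] {f : E → ℝ} {K s a : ℝ}
    (hK : 0 ≤ K) (ha : 0 ≤ a) (hf0 : ∀ x, 0 ≤ f x) (hf : ∀ x, f x ≤ K * (1 + ‖x‖) ^ (-s))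
    (hdim : (Module.finrank ℝ E : ℝ) < a * s) :
    ∫⁻ x, ENNReal.ofReal (f x ^ a) ∂μ < ∞ := by
  have hbound : ∀ x, f x ^ a ≤ K ^ a * (1 + ‖x‖) ^ (-(a * s)) := fun x => by
    have h1 : 0 < 1 + ‖x‖ := by positivity
    calc f x ^ a ≤ (K * (1 + ‖x‖) ^ (-s)) ^ a := Real.rpow_le_rpow (hf0 x) (hf x) ha
      _ = K ^ a * (1 + ‖x‖) ^ (-(a * s)) := by
        rw [Real.mul_rpow hK (Real.rpow_nonneg h1.le _), ← Real.rpow_mul h1.le]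
        ring_nf
  calc ∫⁻ x, ENNReal.ofReal (f x ^ a) ∂μ
      ≤ ∫⁻ x, ENNReal.ofReal (K ^ a) * ENNReal.ofReal ((1 + ‖x‖) ^ (-(a * s))) ∂μ := by
        gcongr with x
        rw [← ENNReal.ofReal_mul (Real.rpow_nonneg hK a)]
        exact ENNReal.ofReal_le_ofReal (hbound x)
    _ = ENNReal.ofReal (K ^ a) * ∫⁻ x, ENNReal.ofReal ((1 + ‖x‖) ^ (-(a * s))) ∂μ :=
        lintegral_const_mul' _ _ ENNReal.ofReal_ne_top
    _ < ∞ := ENNReal.mul_lt_top ENNReal.ofReal_lt_top (finite_integral_one_add_norm hdim)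

section SmallRegime

variable {d : ℕ}

def smallRegimeWeight (d : ℕ) (x : Euc d) : ℝ :=
  (Wgs d x)⁻¹ * ‖fderiv ℝ (Wgs d) x‖ * (Wgs d x / 4) ^ (1 / (2 * ((d : ℝ) - 2)))

lemma smallRegimeWeight_nonneg (hd : 2 < d) (x : Euc d) : 0 ≤ smallRegimeWeight d x := by
  have := Wgs_pos hd x
  unfold smallRegimeWeight
  positivity

lemma measurable_smallRegimeWeight (d : ℕ) : Measurable (smallRegimeWeight d) := by
  have hW : Measurable (Wgs d) := by unfold Wgs; fun_prop
  have hDW : Measurable fun x => ‖fderiv ℝ (Wgs d) x‖ := (measurable_fderiv ℝ (Wgs d)).norm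
  unfold smallRegimeWeight
  fun_prop

lemma pc_eq (hd : 2 < d) :
    pc d = (2 * (d : ℝ) + 3) / (2 * ((d : ℝ) - 2)) + 1 / (2 * ((d : ℝ) - 2)) := by
  have hd' : (2 : ℝ) < d := by exact_mod_cast hd
  have : (d : ℝ) - 2 ≠ 0 := by linarith
  rw [pc]
  field_simp
  ring

lemma q0_eq (hd : 2 < d) : q0 d = (2 * (d : ℝ) + 3) / (2 * ((d : ℝ) - 2)) * 2 := by
  have hd' : (2 : ℝ) < d := by exact_mod_cast hd
  rw [q0]
  field_simp [show (d : ℝ) - 2 ≠ 0 by linarith]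

lemma r0_eq (hd : 2 < d) :
    r0 d = (2 * (d : ℝ) + 3) / (2 * ((d : ℝ) - 2)) * (4 * d / (2 * d - 1)) := by
  have hd' : (2 : ℝ) < d := by exact_mod_cast hd
  rw [r0]
  field_simp [show (d : ℝ) - 2 ≠ 0 by linarith, show 2 * (d : ℝ) - 1 ≠ 0 by linarith]
  ring

lemma holderTriple_smallRegime (hd : 0 < d) :
    (4 * (d : ℝ) / 5).HolderTriple (4 * d / (2 * d - 1)) (2 * d / (d + 2)) := by
  have hd' : (1 : ℝ) ≤ d := by exact_mod_cast hd
  refine ⟨?_, by positivity, div_pos (by positivity) (by linarith)⟩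
  field_simp
  ring

lemma abs_inv_Wgs_mul_norm_fderiv_Wgs_mul_rpow_pc_le (hd : 2 < d) {x : Euc d} {s : ℝ}
    (hs0 : 0 ≤ s) (hs : s ≤ Wgs d x / 4) :
    |(Wgs d x)⁻¹ * ‖fderiv ℝ (Wgs d) x‖ * s ^ pc d| ≤
      smallRegimeWeight d x * s ^ ((2 * (d : ℝ) + 3) / (2 * ((d : ℝ) - 2))) := by
  have hd' : (2 : ℝ) < d := by exact_mod_cast hd
  have hW := Wgs_pos hd x
  rw [abs_of_nonneg (by positivity), smallRegimeWeight,
    mul_assoc (_ * _) ((Wgs d x / 4) ^ _), mul_comm ((Wgs d x / 4) ^ _)]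
  gcongr
  simpa only [pc_eq hd, add_sub_cancel_left] using
    Real.rpow_le_rpow_mul_rpow_sub_of_le (θ := (2 * (d : ℝ) + 3) / (2 * ((d : ℝ) - 2)))
      (p := pc d) hs0 hs (by positivity)
      (by rw [pc_eq hd]; exact le_add_of_nonneg_right (by positivity))

lemma smallRegimeWeight_le (hd : 2 < d) (x : Euc d) :
    smallRegimeWeight d x ≤
      (2 * ((d : ℝ) * ((d : ℝ) - 2))) ^ (5 / 4 : ℝ) / d * (1 + ‖x‖) ^ (-(3 / 2) : ℝ) := by
  have hd' : (2 : ℝ) < d := by exact_mod_cast hd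
  have hW := Wgs_pos hd x
  have hB := WgsBase_pos hd x
  have h1 : 0 < 1 + ‖x‖ := by positivity
  have hWδ : (Wgs d x / 4) ^ (1 / (2 * ((d : ℝ) - 2))) ≤ WgsBase d x ^ (-(1 / 4) : ℝ) :=
    calc (Wgs d x / 4) ^ (1 / (2 * ((d : ℝ) - 2)))
        ≤ Wgs d x ^ (1 / (2 * ((d : ℝ) - 2))) := by gcongr; linarith
      _ = WgsBase d x ^ (-(1 / 4) : ℝ) := by
        rw [Wgs_eq_rpow, ← Real.rpow_mul hB.le]
        congr 1
        field_simp [show (d : ℝ) - 2 ≠ 0 by linarith]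
        ring
  have hB54 : (WgsBase d x)⁻¹ * WgsBase d x ^ (-(1 / 4) : ℝ) = WgsBase d x ^ (-(5 / 4) : ℝ) := by
    rw [← Real.rpow_neg_one, ← Real.rpow_add hB]
    norm_num
  calc smallRegimeWeight d x
      = ‖x‖ / d * ((WgsBase d x)⁻¹ * (Wgs d x / 4) ^ (1 / (2 * ((d : ℝ) - 2)))) := by
        rw [smallRegimeWeight, inv_Wgs_mul_norm_fderiv_Wgs hd]
        ring
    _ ≤ (1 + ‖x‖) / d * WgsBase d x ^ (-(5 / 4) : ℝ) := by
        rw [← hB54]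
        gcongr
        linarith
    _ ≤ (1 + ‖x‖) / d *
          ((2 * ((d : ℝ) * ((d : ℝ) - 2))) ^ (5 / 4 : ℝ) * (1 + ‖x‖) ^ (-(2 * (5 / 4)) : ℝ)) := by
        gcongr
        exact WgsBase_rpow_neg_le hd (by norm_num) x
    _ = _ := by
        rw [show (-(3 / 2) : ℝ) = 1 + -(2 * (5 / 4)) by norm_num, Real.rpow_add h1,
          Real.rpow_one]
        ring

lemma lintegral_smallRegimeWeight_rpow_lt_top (hd : 2 < d) :
    ∫⁻ x, ENNReal.ofReal (smallRegimeWeight d x ^ (4 * (d : ℝ) / 5)) < ∞ := by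
  have hd' : (2 : ℝ) < d := by exact_mod_cast hd
  refine lintegral_ofReal_rpow_lt_top_of_le_mul_one_add_norm_rpow_neg (by positivity)
    (by positivity) (smallRegimeWeight_nonneg hd) (smallRegimeWeight_le hd) ?_
  rw [finrank_euclideanSpace, Fintype.card_fin]
  linarith

end SmallRegime

theorem Winv_gradW_vpc_small_regime_general (d : ℕ) (hd : 6 ≤ d) (I : Set ℝ) :
    ∃ C : ℝ, 0 < C ∧ ∀ v : ℝ × Euc d → ℂ, Measurable v →
      mixNorm d 2 (2 * (d : ℝ) / ((d : ℝ) + 2)) I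
          {p : ℝ × Euc d | p.1 ∈ I ∧ ‖v p‖ ≤ Wgs d p.2 / 4}
          (fun p => (Wgs d p.2)⁻¹ * ‖fderiv ℝ (Wgs d) p.2‖ * ‖v p‖ ^ (pc d)) ≤
        ENNReal.ofReal C *
          (mixNorm d (q0 d) (r0 d) I Set.univ (fun p => ‖v p‖)) ^
            ((2 * (d : ℝ) + 3) / (2 * ((d : ℝ) - 2))) := by
  have hd2 : 2 < d := by omega
  have hθ : 0 < (2 * (d : ℝ) + 3) / (2 * ((d : ℝ) - 2)) := by
    have : (2 : ℝ) < d := by exact_mod_cast hd2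
    positivity
  set A := ∫⁻ x, ENNReal.ofReal (smallRegimeWeight d x ^ (4 * (d : ℝ) / 5))
  have hA : A ≠ ∞ := (lintegral_smallRegimeWeight_rpow_lt_top hd2).ne
  have hAC : A ^ (4 * (d : ℝ) / 5)⁻¹ ≤ ENNReal.ofReal ((A ^ (4 * (d : ℝ) / 5)⁻¹).toReal + 1) := by
    rw [ENNReal.ofReal_add ENNReal.toReal_nonneg zero_le_one,
      ENNReal.ofReal_toReal (ENNReal.rpow_ne_top_of_nonneg (by positivity) hA)]
    exact le_self_add
  refine ⟨(A ^ (4 * (d : ℝ) / 5)⁻¹).toReal + 1, by positivity, fun v hv => ?_⟩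
  rw [q0_eq hd2, r0_eq hd2]
  refine (mixNorm_le_of_le_weight_mul two_pos (holderTriple_smallRegime (by omega))
    hθ (smallRegimeWeight_nonneg hd2)
    (measurable_smallRegimeWeight d) hA hv.norm fun p hp => ?_).trans (by gcongr)
  rw [abs_norm]
  exact abs_inv_Wgs_mul_norm_fderiv_Wgs_mul_rpow_pc_le hd2 (norm_nonneg _) hp.2

/-- on Ω' = {|v| ≤ W/4},
‖W^{−1}|∇W||v|^{p_c}‖_{L²_t L^{2d/(d+2)}_x(Ω')} ≤ C ‖v‖_{L^{q₀}_t L^{r₀}_x}^{(2d+3)/(2(d−2))}. -/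
theorem Winv_gradW_vpc_small_regime (d : ℕ) (hd : 6 ≤ d) (I : Set ℝ) (hI : I.OrdConnected) :
    ∃ C : ℝ, 0 < C ∧ ∀ v : ℝ × Euc d → ℂ, Measurable v →
      mixNorm d 2 (2 * (d : ℝ) / ((d : ℝ) + 2)) I
          {p : ℝ × Euc d | p.1 ∈ I ∧ ‖v p‖ ≤ Wgs d p.2 / 4}
          (fun p => (Wgs d p.2)⁻¹ * ‖fderiv ℝ (Wgs d) p.2‖ * ‖v p‖ ^ (pc d)) ≤
        ENNReal.ofReal C *
          (mixNorm d (q0 d) (r0 d) I Set.univ (fun p => ‖v p‖)) ^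
            ((2 * (d : ℝ) + 3) / (2 * ((d : ℝ) - 2))) :=
  Winv_gradW_vpc_small_regime_general d hd I
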